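/- arXiv:1204.5658 — 11 statements merged into one kernel-verified Lean document; each statement's English description precedes it below -/
import Mathlib

section
/- Let X be a type, let a : X, and let α, β, β' be elements of FreeGroup X that avoid a. Then the quotient of FreeGroup X by the normal closure of {α * (of a) * β * β' * (of a)⁻¹} is isomorphic (as a group) to the quotient of FreeGroup X by the normal closure of {α * (of a) * β' * β * (of a)⁻¹}. (This is the group-theoretic form of rule (4), the surgery rule for a discord pair of letters.) -/
/-- An element `u` of the free group on `X` *avoids* the letter `a` if it lies in the
subgroup generated by the generators other than `a`. -/
def FreeGroup.Avoids {X : Type*} (a : X) (u : FreeGroup X) : Prop :=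
  u ∈ Subgroup.closure {w : FreeGroup X | ∃ x : X, x ≠ a ∧ w = FreeGroup.of x}

section Aux

variable {X : Type*} [DecidableEq X]

/-- The endomorphism sending `a ↦ a * c` and fixing all other generators. -/
noncomputable def discordHom (a : X) (c : FreeGroup X) : FreeGroup X →* FreeGroup X :=
  FreeGroup.lift (fun x => if x = a then FreeGroup.of a * c else FreeGroup.of x)

lemma discordHom_fix (a : X) (c u : FreeGroup X) (hu : FreeGroup.Avoids a u) :
    discordHom a c u = u := by
  refine Subgroup.closure_induction ?_ (map_one _) ?_ ?_ hu
  · rintro w ⟨x, hx, rfl⟩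
    simp [discordHom, FreeGroup.lift_apply_of, if_neg hx]
  · intro x y _ _ hx hy; rw [map_mul, hx, hy]
  · intro x _ hx; rw [map_inv, hx]

lemma discordHom_comp (a : X) (c : FreeGroup X) (hc : FreeGroup.Avoids a c) :
    (discordHom a c⁻¹).comp (discordHom a c) = MonoidHom.id _ := by
  apply FreeGroup.ext_hom
  intro x
  by_cases hx : x = a
  · subst hx
    rw [MonoidHom.comp_apply, MonoidHom.id_apply]
    have h1 : discordHom x c (FreeGroup.of x) = FreeGroup.of x * c := by simp [discordHom]
    have h2 : discordHom x c⁻¹ (FreeGroup.of x) = FreeGroup.of x * c⁻¹ := by simp [discordHom]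
    rw [h1, map_mul, discordHom_fix x c⁻¹ c hc, h2]
    group
  · simp [MonoidHom.comp_apply, discordHom, FreeGroup.lift_apply_of, if_neg hx]

/-- The automorphism sending `a ↦ a * c` and fixing other generators, for `c` avoiding `a`. -/
noncomputable def discordEquiv (a : X) (c : FreeGroup X) (hc : FreeGroup.Avoids a c) :
    FreeGroup X ≃* FreeGroup X :=
  MonoidHom.toMulEquiv (discordHom a c) (discordHom a c⁻¹)
    (discordHom_comp a c hc)
    (by have := discordHom_comp a c⁻¹ (by exact inv_mem hc); rwa [inv_inv] at this)

end Aux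

/-- Rule (4), group-theoretic form: for a discord pair of letters, the two subwords
between the occurrences of `a` may be swapped without changing the one-relator quotient. -/
theorem discord_rule_quotient_iso {X : Type*} (a : X) (α β β' : FreeGroup X)
    (hα : FreeGroup.Avoids a α) (hβ : FreeGroup.Avoids a β) (hβ' : FreeGroup.Avoids a β') :
    Nonempty
      ((FreeGroup X ⧸ Subgroup.normalClosure
          {α * FreeGroup.of a * β * β' * (FreeGroup.of a)⁻¹}) ≃*
       (FreeGroup X ⧸ Subgroup.normalClosure
          {α * FreeGroup.of a * β' * β * (FreeGroup.of a)⁻¹})) := by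
  classical
  set e := discordEquiv a β hβ with he
  have hmap : (Subgroup.normalClosure
      {α * FreeGroup.of a * β' * β * (FreeGroup.of a)⁻¹}).map e.toMonoidHom =
      Subgroup.normalClosure {α * FreeGroup.of a * β * β' * (FreeGroup.of a)⁻¹} := by
    rw [Subgroup.map_normalClosure _ e.toMonoidHom (by exact e.surjective)]
    congr 1
    rw [Set.image_singleton]
    congr 1
    have hea : e (FreeGroup.of a) = FreeGroup.of a * β := by
      simp [he, discordEquiv, discordHom, FreeGroup.lift_apply_of]
    have heα : e α = α := discordHom_fix a β α hα
    have heβ : e β = β := discordHom_fix a β β hβ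
    have heβ' : e β' = β' := discordHom_fix a β β' hβ'
    calc e (α * FreeGroup.of a * β' * β * (FreeGroup.of a)⁻¹)
        = α * (FreeGroup.of a * β) * β' * β * (FreeGroup.of a * β)⁻¹ := by
          simp only [map_mul, map_inv, hea, heα, heβ, heβ']
      _ = α * FreeGroup.of a * β * β' * (FreeGroup.of a)⁻¹ := by
          group
  exact ⟨(QuotientGroup.congr _ _ e hmap).symm⟩
end

section
/- Let X be a type, let a : X, and let α, β be elements of FreeGroup X that avoid a. Then the quotient of FreeGroup X by the normal closure of {α * (of a) * β * (of a)} is isomorphic to the quotient of FreeGroup X by the normal closure of {α * β⁻¹ * (of a) * (of a)}. (This is the group-theoretic form of rule (5), the surgery rule for a concord pair of letters.) -/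
section aux

open scoped Classical

variable {X : Type*} (a : X) (β : FreeGroup X)

/-- The endomorphism sending `a ↦ β⁻¹ * a` and fixing other generators. -/
private noncomputable def myPhi : FreeGroup X →* FreeGroup X :=
  FreeGroup.lift (fun x => if x = a then β⁻¹ * FreeGroup.of a else FreeGroup.of x)

private noncomputable def myPsi : FreeGroup X →* FreeGroup X :=
  FreeGroup.lift (fun x => if x = a then β * FreeGroup.of a else FreeGroup.of x)

private lemma myPhi_of_a : myPhi a β (FreeGroup.of a) = β⁻¹ * FreeGroup.of a := by
  simp [myPhi]

private lemma myPsi_of_a : myPsi a β (FreeGroup.of a) = β * FreeGroup.of a := by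
  simp [myPsi]

private lemma myPhi_of_ne {x : X} (hx : x ≠ a) :
    myPhi a β (FreeGroup.of x) = FreeGroup.of x := by simp [myPhi, hx]

private lemma myPsi_of_ne {x : X} (hx : x ≠ a) :
    myPsi a β (FreeGroup.of x) = FreeGroup.of x := by simp [myPsi, hx]

private lemma myPhi_fix {u : FreeGroup X} (hu : FreeGroup.Avoids a u) : myPhi a β u = u := by
  refine Subgroup.closure_induction ?_ (by simp) ?_ ?_ hu
  · rintro w ⟨x, hx, rfl⟩
    exact myPhi_of_ne a β hx
  · intro x y _ _ hx hy; simp [map_mul, hx, hy]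
  · intro x _ hx; simp [map_inv, hx]

private lemma myPsi_fix {u : FreeGroup X} (hu : FreeGroup.Avoids a u) : myPsi a β u = u := by
  refine Subgroup.closure_induction ?_ (by simp) ?_ ?_ hu
  · rintro w ⟨x, hx, rfl⟩
    exact myPsi_of_ne a β hx
  · intro x y _ _ hx hy; simp [map_mul, hx, hy]
  · intro x _ hx; simp [map_inv, hx]

/-- The automorphism sending `a ↦ β⁻¹ * a`. -/
private noncomputable def Phi (hβ : FreeGroup.Avoids a β) : FreeGroup X ≃* FreeGroup X where
  toFun := myPhi a β
  invFun := myPsi a β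
  left_inv := by
    intro u
    have : (myPsi a β).comp (myPhi a β) = MonoidHom.id _ := by
      apply FreeGroup.ext_hom
      intro x
      by_cases hx : x = a
      · subst hx
        simp [MonoidHom.comp_apply, myPhi_of_a, myPsi_of_a, map_mul, map_inv,
          myPsi_fix x β hβ]
      · simp [MonoidHom.comp_apply, myPhi_of_ne a β hx, myPsi_of_ne a β hx]
    exact DFunLike.congr_fun this u
  right_inv := by
    intro u
    have : (myPhi a β).comp (myPsi a β) = MonoidHom.id _ := by
      apply FreeGroup.ext_hom
      intro x
      by_cases hx : x = a
      · subst hx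
        simp [MonoidHom.comp_apply, myPhi_of_a, myPsi_of_a, map_mul,
          myPhi_fix x β hβ, mul_assoc]
      · simp [MonoidHom.comp_apply, myPhi_of_ne a β hx, myPsi_of_ne a β hx]
    exact DFunLike.congr_fun this u
  map_mul' := map_mul _

end aux

/-- Rule (5), group-theoretic form: the surgery rule for a concord pair of letters
does not change the one-relator quotient. -/
theorem concord_rule_quotient_iso {X : Type*} (a : X) (α β : FreeGroup X)
    (hα : FreeGroup.Avoids a α) (hβ : FreeGroup.Avoids a β) :
    Nonempty
      ((FreeGroup X ⧸ Subgroup.normalClosure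
          {α * FreeGroup.of a * β * FreeGroup.of a}) ≃*
       (FreeGroup X ⧸ Subgroup.normalClosure
          {α * β⁻¹ * FreeGroup.of a * FreeGroup.of a})) := by
  refine ⟨QuotientGroup.congr _ _ (Phi a β hβ) ?_⟩
  have hmap : Subgroup.map ((Phi a β hβ) : FreeGroup X →* FreeGroup X)
      (Subgroup.normalClosure {α * FreeGroup.of a * β * FreeGroup.of a})
      = Subgroup.normalClosure
        ((Phi a β hβ) '' {α * FreeGroup.of a * β * FreeGroup.of a}) :=
    Subgroup.map_normalClosure _ _ (Phi a β hβ).surjective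
  rw [hmap, Set.image_singleton]
  congr 1
  have ha : (Phi a β hβ) (FreeGroup.of a) = β⁻¹ * FreeGroup.of a := myPhi_of_a a β
  have hA : (Phi a β hβ) α = α := myPhi_fix a β hα
  have hB : (Phi a β hβ) β = β := myPhi_fix a β hβ
  rw [show (α * FreeGroup.of a * β * FreeGroup.of a)
      = α * FreeGroup.of a * β * FreeGroup.of a from rfl]
  simp only [map_mul, ha, hA, hB]
  group
end

section
/- Let X be a type, let a : X, and let α, β, β' be elements of FreeGroup X that avoid a. Then the quotient of FreeGroup X by the normal closure of {α * (of a) * β * β' * (of a)} is isomorphic to the quotient of FreeGroup X by the normal closure of {α * β'⁻¹ * (of a) * (of a) * β⁻¹}. (This is the generalized concord rule (5').) -/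
/-- A monoid hom of the free group fixing all generators other than `a` fixes every
element avoiding `a`. -/
theorem FreeGroup.Avoids.map_eq {X : Type*} {a : X} {u : FreeGroup X}
    (h : FreeGroup X →* FreeGroup X)
    (hh : ∀ x : X, x ≠ a → h (FreeGroup.of x) = FreeGroup.of x)
    (hu : FreeGroup.Avoids a u) : h u = u := by
  refine Subgroup.closure_induction ?_ ?_ ?_ ?_ hu
  · rintro w ⟨x, hx, rfl⟩; exact hh x hx
  · simp
  · intro x y _ _ hx hy; simp [map_mul, hx, hy]
  · intro x _ hx; simp [map_inv, hx]

/-- Rule (5'), the generalized concord rule, does not change the one-relator quotient. -/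
theorem concord_rule'_quotient_iso {X : Type*} (a : X) (α β β' : FreeGroup X)
    (hα : FreeGroup.Avoids a α) (hβ : FreeGroup.Avoids a β) (hβ' : FreeGroup.Avoids a β') :
    Nonempty
      ((FreeGroup X ⧸ Subgroup.normalClosure
          {α * FreeGroup.of a * β * β' * FreeGroup.of a}) ≃*
       (FreeGroup X ⧸ Subgroup.normalClosure
          {α * β'⁻¹ * FreeGroup.of a * FreeGroup.of a * β⁻¹})) := by
  classical
  set f : FreeGroup X →* FreeGroup X := FreeGroup.lift
    (fun x => if x = a then β'⁻¹ * FreeGroup.of a * β⁻¹ else FreeGroup.of x) with hf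
  set g : FreeGroup X →* FreeGroup X := FreeGroup.lift
    (fun x => if x = a then β' * FreeGroup.of a * β else FreeGroup.of x) with hg
  have hfof : ∀ x : X, x ≠ a → f (FreeGroup.of x) = FreeGroup.of x := by
    intro x hx; simp [hf, hx]
  have hgof : ∀ x : X, x ≠ a → g (FreeGroup.of x) = FreeGroup.of x := by
    intro x hx; simp [hg, hx]
  have hfa : f (FreeGroup.of a) = β'⁻¹ * FreeGroup.of a * β⁻¹ := by simp [hf]
  have hga : g (FreeGroup.of a) = β' * FreeGroup.of a * β := by simp [hg]
  have hfα := hα.map_eq f hfof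
  have hfβ := hβ.map_eq f hfof
  have hfβ' := hβ'.map_eq f hfof
  have hgβ := hβ.map_eq g hgof
  have hgβ' := hβ'.map_eq g hgof
  have hfβi : f β⁻¹ = β⁻¹ := by rw [map_inv, hfβ]
  have hfβ'i : f β'⁻¹ = β'⁻¹ := by rw [map_inv, hfβ']
  have hgβi : g β⁻¹ = β⁻¹ := by rw [map_inv, hgβ]
  have hgβ'i : g β'⁻¹ = β'⁻¹ := by rw [map_inv, hgβ']
  have hgf : g.comp f = MonoidHom.id _ := by
    apply FreeGroup.ext_hom
    intro x
    by_cases hx : x = a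
    · subst hx
      simp only [MonoidHom.comp_apply, MonoidHom.id_apply, hfa, map_mul, hga, hgβi, hgβ'i]
      group
    · simp [MonoidHom.comp_apply, hfof x hx, hgof x hx]
  have hfg : f.comp g = MonoidHom.id _ := by
    apply FreeGroup.ext_hom
    intro x
    by_cases hx : x = a
    · subst hx
      simp only [MonoidHom.comp_apply, MonoidHom.id_apply, hga, map_mul, hfa, hfβ, hfβ']
      group
    · simp [MonoidHom.comp_apply, hfof x hx, hgof x hx]
  let e : FreeGroup X ≃* FreeGroup X := MonoidHom.toMulEquiv f g hgf hfg
  have hr : f (α * FreeGroup.of a * β * β' * FreeGroup.of a)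
      = α * β'⁻¹ * FreeGroup.of a * FreeGroup.of a * β⁻¹ := by
    simp only [map_mul, hfα, hfa, hfβ, hfβ']
    group
  have hmap : (Subgroup.normalClosure {α * FreeGroup.of a * β * β' * FreeGroup.of a}).map
      (e : FreeGroup X →* FreeGroup X)
      = Subgroup.normalClosure {α * β'⁻¹ * FreeGroup.of a * FreeGroup.of a * β⁻¹} := by
    have h1 := Subgroup.map_normalClosure {α * FreeGroup.of a * β * β' * FreeGroup.of a} f
      e.surjective
    rw [Set.image_singleton, hr] at h1
    exact h1
  exact ⟨QuotientGroup.congr _ _ e hmap⟩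
end

section
/- Let X be a type, let a : X, and let α, β, γ be elements of FreeGroup X that avoid a. Then the quotient of FreeGroup X by the normal closure of {α * (of a) * (of a) * β * γ} is isomorphic to the quotient of FreeGroup X by the normal closure of {α * β * (of a) * (of a) * γ}. (Rule (7): a block aa can be freely moved past a subword.) -/
section aux

variable {X : Type*} [DecidableEq X]

/-- The endomorphism sending `of a` to `c * of a * c⁻¹` and fixing other generators. -/
noncomputable def conjA (a : X) (c : FreeGroup X) : FreeGroup X →* FreeGroup X :=
  FreeGroup.lift (fun x => if x = a then c * FreeGroup.of a * c⁻¹ else FreeGroup.of x)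

theorem conjA_fixes (a : X) (c u : FreeGroup X) (hu : FreeGroup.Avoids a u) :
    conjA a c u = u := by
  refine Subgroup.closure_induction ?_ (by simp) ?_ ?_ hu
  · rintro w ⟨x, hx, rfl⟩
    simp [conjA, hx]
  · intro x y _ _ hx hy; simp [map_mul, hx, hy]
  · intro x _ hx; simp [map_inv, hx]

theorem conjA_comp (a : X) (c : FreeGroup X) (hc : FreeGroup.Avoids a c) :
    (conjA a c⁻¹).comp (conjA a c) = MonoidHom.id _ := by
  apply FreeGroup.ext_hom
  intro x
  by_cases hx : x = a
  · subst hx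
    have h1 : conjA x c⁻¹ c = c := conjA_fixes x c⁻¹ c hc
    simp only [MonoidHom.comp_apply, MonoidHom.id_apply, conjA, FreeGroup.lift_apply_of, if_pos rfl,
      if_true, map_mul, map_inv] at h1 ⊢
    rw [show (FreeGroup.lift fun y => if y = x then c⁻¹ * FreeGroup.of x * c⁻¹⁻¹
        else FreeGroup.of y) c = c from h1]
    group
  · simp [conjA, hx]

/-- The automorphism sending `of a` to `c * of a * c⁻¹` and fixing other generators. -/
noncomputable def conjAequiv (a : X) (c : FreeGroup X) (hc : FreeGroup.Avoids a c) :
    FreeGroup X ≃* FreeGroup X :=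
  MonoidHom.toMulEquiv (conjA a c) (conjA a c⁻¹)
    (conjA_comp a c hc)
    (by simpa using conjA_comp a c⁻¹ (by simpa [FreeGroup.Avoids] using inv_mem hc))

end aux

/-- Rule (7): the block `a a` can be freely moved past a subword without changing
the one-relator quotient. -/
theorem move_aa_block_quotient_iso {X : Type*} (a : X) (α β γ : FreeGroup X)
    (hα : FreeGroup.Avoids a α) (hβ : FreeGroup.Avoids a β) (hγ : FreeGroup.Avoids a γ) :
    Nonempty
      ((FreeGroup X ⧸ Subgroup.normalClosure
          {α * FreeGroup.of a * FreeGroup.of a * β * γ}) ≃*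
       (FreeGroup X ⧸ Subgroup.normalClosure
          {α * β * FreeGroup.of a * FreeGroup.of a * γ})) := by
  classical
  set e := conjAequiv a β hβ with he
  have hmap : (Subgroup.normalClosure
      {α * FreeGroup.of a * FreeGroup.of a * β * γ}).map (e : FreeGroup X →* FreeGroup X)
      = Subgroup.normalClosure {α * β * FreeGroup.of a * FreeGroup.of a * γ} := by
    rw [Subgroup.map_normalClosure _ (e : FreeGroup X →* FreeGroup X) (MulEquiv.surjective e)]
    congr 1
    have ha : (e : FreeGroup X →* FreeGroup X) (FreeGroup.of a)
        = β * FreeGroup.of a * β⁻¹ := by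
      simp [he, conjAequiv, conjA]
    have hfix : ∀ u, FreeGroup.Avoids a u → (e : FreeGroup X →* FreeGroup X) u = u :=
      fun u hu => conjA_fixes a β u hu
    rw [Set.image_singleton]
    congr 1
    rw [map_mul, map_mul, map_mul, map_mul, ha, hfix α hα, hfix β hβ, hfix γ hγ]
    group
  exact ⟨QuotientGroup.congr _ _ e hmap⟩
end

section
/- Let X be a type, let a, b : X with a ≠ b, and let α, β, γ be elements of FreeGroup X that avoid a and avoid b. Then the quotient of FreeGroup X by the normal closure of {α * (of a) * (of b) * (of a)⁻¹ * (of b)⁻¹ * β * γ} is isomorphic to the quotient of FreeGroup X by the normal closure of {α * β * (of a) * (of b) * (of a)⁻¹ * (of b)⁻¹ * γ}. (Rule (7): a commutator block a b a⁻¹ b⁻¹ can be freely moved past a subword.) -/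
private theorem fix_of_avoids {X : Type*} (a : X) (φ : FreeGroup X →* FreeGroup X)
    (hφ : ∀ x : X, x ≠ a → φ (FreeGroup.of x) = FreeGroup.of x)
    {u : FreeGroup X} (hu : FreeGroup.Avoids a u) : φ u = u := by
  have : Subgroup.closure {w : FreeGroup X | ∃ x : X, x ≠ a ∧ w = FreeGroup.of x}
      ≤ φ.eqLocus (MonoidHom.id _) := by
    rw [Subgroup.closure_le]
    rintro w ⟨x, hx, rfl⟩
    exact hφ x hx
  exact this hu

/-- Rule (7): the commutator block `a b a⁻¹ b⁻¹` can be freely moved past a subword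
without changing the one-relator quotient. -/
theorem move_commutator_block_quotient_iso {X : Type*} (a b : X) (hab : a ≠ b)
    (α β γ : FreeGroup X)
    (hαa : FreeGroup.Avoids a α) (hβa : FreeGroup.Avoids a β) (hγa : FreeGroup.Avoids a γ)
    (hαb : FreeGroup.Avoids b α) (hβb : FreeGroup.Avoids b β) (hγb : FreeGroup.Avoids b γ) :
    Nonempty
      ((FreeGroup X ⧸ Subgroup.normalClosure
          {α * FreeGroup.of a * FreeGroup.of b * (FreeGroup.of a)⁻¹ * (FreeGroup.of b)⁻¹
            * β * γ}) ≃*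
       (FreeGroup X ⧸ Subgroup.normalClosure
          {α * β * FreeGroup.of a * FreeGroup.of b * (FreeGroup.of a)⁻¹ * (FreeGroup.of b)⁻¹
            * γ})) := by
  classical
  set φ : FreeGroup X →* FreeGroup X :=
    FreeGroup.lift (fun x => if x = a ∨ x = b then β * FreeGroup.of x * β⁻¹ else FreeGroup.of x)
    with hφdef
  set ψ : FreeGroup X →* FreeGroup X :=
    FreeGroup.lift (fun x => if x = a ∨ x = b then β⁻¹ * FreeGroup.of x * β else FreeGroup.of x)
    with hψdef
  have hφofa : φ (FreeGroup.of a) = β * FreeGroup.of a * β⁻¹ := by simp [hφdef]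
  have hφofb : φ (FreeGroup.of b) = β * FreeGroup.of b * β⁻¹ := by simp [hφdef]
  have hφof : ∀ x : X, x ≠ a → x ≠ b → φ (FreeGroup.of x) = FreeGroup.of x := by
    intro x hxa hxb; simp [hφdef, hxa, hxb]
  have hψofa : ψ (FreeGroup.of a) = β⁻¹ * FreeGroup.of a * β := by simp [hψdef]
  have hψofb : ψ (FreeGroup.of b) = β⁻¹ * FreeGroup.of b * β := by simp [hψdef]
  have hψof : ∀ x : X, x ≠ a → x ≠ b → ψ (FreeGroup.of x) = FreeGroup.of x := by
    intro x hxa hxb; simp [hψdef, hxa, hxb]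
  -- retraction killing a and b
  set ρ : FreeGroup X →* FreeGroup X :=
    FreeGroup.lift (fun x => if x = a ∨ x = b then 1 else FreeGroup.of x) with hρdef
  have hρfix : ∀ u : FreeGroup X, FreeGroup.Avoids a u → FreeGroup.Avoids b u → ρ u = u := by
    intro u hua hub
    set πa : FreeGroup X →* FreeGroup X :=
      FreeGroup.lift (fun x => if x = a then 1 else FreeGroup.of x) with hπa
    set πb : FreeGroup X →* FreeGroup X :=
      FreeGroup.lift (fun x => if x = b then 1 else FreeGroup.of x) with hπb
    have h1 : πa u = u := fix_of_avoids a πa (by intro x hx; simp [hπa, hx]) hua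
    have h2 : πb u = u := fix_of_avoids b πb (by intro x hx; simp [hπb, hx]) hub
    have hcomp : ρ = πb.comp πa := by
      apply FreeGroup.ext_hom
      intro x
      by_cases hxa : x = a <;> by_cases hxb : x = b <;>
        simp [hρdef, hπa, hπb, hxa, hxb, hab, Ne.symm hab]
    rw [hcomp]
    simp [MonoidHom.comp_apply, h1, h2]
  have hfixρ : ∀ (θ : FreeGroup X →* FreeGroup X),
      (∀ x : X, x ≠ a → x ≠ b → θ (FreeGroup.of x) = FreeGroup.of x) →
      ∀ u : FreeGroup X, FreeGroup.Avoids a u → FreeGroup.Avoids b u → θ u = u := by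
    intro θ hθ u hua hub
    have hcomp : θ.comp ρ = ρ := by
      apply FreeGroup.ext_hom
      intro x
      by_cases hxa : x = a <;> by_cases hxb : x = b <;>
        simp [hρdef, hxa, hxb, hθ x]
    have h := congrArg (fun f : FreeGroup X →* FreeGroup X => f u) hcomp
    simp only [MonoidHom.comp_apply] at h
    rw [hρfix u hua hub] at h
    exact h
  have hφρ := hfixρ φ hφof
  have hψρ := hfixρ ψ hψof
  have hψβ : ψ β = β := hψρ β hβa hβb
  have hφβ : φ β = β := hφρ β hβa hβb
  have hψφ : ψ.comp φ = MonoidHom.id _ := by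
    apply FreeGroup.ext_hom
    intro x
    by_cases hxa : x = a <;> by_cases hxb : x = b
    · exact absurd (hxa.symm.trans hxb) hab
    · simp only [MonoidHom.comp_apply, MonoidHom.id_apply, hxa, hφofa,
        map_mul, map_inv, hψβ, hψofa]
      group
    · simp only [MonoidHom.comp_apply, MonoidHom.id_apply, hxb, hφofb,
        map_mul, map_inv, hψβ, hψofb]
      group
    · simp only [MonoidHom.comp_apply, MonoidHom.id_apply, hφof x hxa hxb, hψof x hxa hxb]
  have hφψ : φ.comp ψ = MonoidHom.id _ := by
    apply FreeGroup.ext_hom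
    intro x
    by_cases hxa : x = a <;> by_cases hxb : x = b
    · exact absurd (hxa.symm.trans hxb) hab
    · simp only [MonoidHom.comp_apply, MonoidHom.id_apply, hxa, hψofa,
        map_mul, map_inv, hφβ, hφofa]
      group
    · simp only [MonoidHom.comp_apply, MonoidHom.id_apply, hxb, hψofb,
        map_mul, map_inv, hφβ, hφofb]
      group
    · simp only [MonoidHom.comp_apply, MonoidHom.id_apply, hψof x hxa hxb, hφof x hxa hxb]
  let e : FreeGroup X ≃* FreeGroup X :=
    { toFun := φ, invFun := ψ,
      left_inv := fun u => by
        have := congrArg (fun f : FreeGroup X →* FreeGroup X => f u) hψφ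
        simpa using this,
      right_inv := fun u => by
        have := congrArg (fun f : FreeGroup X →* FreeGroup X => f u) hφψ
        simpa using this,
      map_mul' := map_mul φ }
  have hrel : φ (α * FreeGroup.of a * FreeGroup.of b * (FreeGroup.of a)⁻¹ * (FreeGroup.of b)⁻¹
      * β * γ) = α * β * FreeGroup.of a * FreeGroup.of b * (FreeGroup.of a)⁻¹ * (FreeGroup.of b)⁻¹
      * γ := by
    simp only [map_mul, map_inv, hφofa, hφofb, hφρ α hαa hαb, hφρ γ hγa hγb, hφβ]
    group
  refine ⟨QuotientGroup.congr _ _ e ?_⟩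
  have hsurj : Function.Surjective (e : FreeGroup X →* FreeGroup X) := e.surjective
  rw [Subgroup.map_normalClosure _ _ hsurj, Set.image_singleton]
  show Subgroup.normalClosure {φ _} = _
  rw [hrel]
end

section
/- Let X be a type, let a, b : X with a ≠ b, and let α, β, γ, δ, ε be elements of FreeGroup X that avoid a and avoid b. Then the quotient of FreeGroup X by the normal closure of {α * (of a) * β * (of b) * γ * (of a)⁻¹ * δ * (of b)⁻¹ * ε} is isomorphic to the quotient of FreeGroup X by the normal closure of {(of a) * (of b) * (of a)⁻¹ * (of b)⁻¹ * ε * α * δ * γ * β}. (This is the torus-extraction step (b) of the classification proof: two interleaved discord pairs can be collected into a commutator block.) -/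
namespace TorusExtraction

open FreeGroup
open scoped Classical

variable {X : Type*}

lemma fix_of_avoids {a : X} {f : FreeGroup X →* FreeGroup X}
    (hf : ∀ x : X, x ≠ a → f (FreeGroup.of x) = FreeGroup.of x)
    {u : FreeGroup X} (hu : u.Avoids a) : f u = u := by
  induction hu using Subgroup.closure_induction with
  | mem w hw => obtain ⟨x, hx, rfl⟩ := hw; exact hf x hx
  | one => simp
  | mul x y hx hy ihx ihy => simp [map_mul, ihx, ihy]
  | inv x hx ih => simp [map_inv, ih]

/-- Elementary automorphism `of a ↦ p * of a * q`, fixing other generators. -/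
noncomputable def elemMap (a : X) (p q : FreeGroup X) : FreeGroup X →* FreeGroup X :=
  FreeGroup.lift (fun x => if x = a then p * FreeGroup.of a * q else FreeGroup.of x)

lemma elemMap_of_ne (a : X) (p q : FreeGroup X) {x : X} (hx : x ≠ a) :
    elemMap a p q (FreeGroup.of x) = FreeGroup.of x := by
  simp [elemMap, hx]

lemma elemMap_of_self (a : X) (p q : FreeGroup X) :
    elemMap a p q (FreeGroup.of a) = p * FreeGroup.of a * q := by
  simp [elemMap]

lemma elemMap_fix {a : X} (p q : FreeGroup X) {u : FreeGroup X} (hu : u.Avoids a) :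
    elemMap a p q u = u :=
  fix_of_avoids (fun _ hx => elemMap_of_ne a p q hx) hu

lemma elemMap_comp (a : X) (p q : FreeGroup X) (hp : p.Avoids a) (hq : q.Avoids a) :
    (elemMap a p q).comp (elemMap a p⁻¹ q⁻¹) = MonoidHom.id _ := by
  apply FreeGroup.ext_hom
  intro x
  by_cases hx : x = a
  · subst hx
    rw [MonoidHom.comp_apply, MonoidHom.id_apply, elemMap_of_self, MonoidHom.map_mul,
      MonoidHom.map_mul, MonoidHom.map_inv, MonoidHom.map_inv, elemMap_of_self, elemMap_fix p q hp, elemMap_fix p q hq]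
    group
  · simp [MonoidHom.comp_apply, elemMap_of_ne a _ _ hx]

noncomputable def elemAut (a : X) (p q : FreeGroup X) (hp : p.Avoids a) (hq : q.Avoids a) :
    FreeGroup X ≃* FreeGroup X where
  toFun := elemMap a p q
  invFun := elemMap a p⁻¹ q⁻¹
  left_inv u := by
    have := DFunLike.congr_fun (elemMap_comp a p⁻¹ q⁻¹ (Subgroup.inv_mem _ hp)
      (Subgroup.inv_mem _ hq)) u
    simpa using this
  right_inv u := by
    have := DFunLike.congr_fun (elemMap_comp a p q hp hq) u
    simpa using this
  map_mul' := map_mul _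

lemma normalClosure_conj {G : Type*} [Group G] (g r : G) :
    Subgroup.normalClosure {g * r * g⁻¹} = Subgroup.normalClosure {r} := by
  have h1 : ({g * r * g⁻¹} : Set G) ⊆ ↑(Subgroup.normalClosure {r}) := by
    rintro x hx
    rw [Set.mem_singleton_iff] at hx; subst hx
    exact SetLike.mem_coe.mpr <| Subgroup.normalClosure_normal.conj_mem r (Subgroup.subset_normalClosure (Set.mem_singleton r)) g
  have h2 : ({r} : Set G) ⊆ ↑(Subgroup.normalClosure {g * r * g⁻¹}) := by
    rintro x hx
    rw [Set.mem_singleton_iff] at hx; subst hx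
    have := Subgroup.normalClosure_normal.conj_mem _
      (Subgroup.subset_normalClosure (Set.mem_singleton (g * x * g⁻¹))) g⁻¹
    exact SetLike.mem_coe.mpr (by simpa [mul_assoc] using this)
  exact le_antisymm (Subgroup.normalClosure_le_normal h1) (Subgroup.normalClosure_le_normal h2)

end TorusExtraction

/-- Step (b) of the classification proof (torus extraction): two interleaved discord
pairs can be collected into a commutator block, without changing the one-relator quotient. -/
theorem torus_extraction_quotient_iso {X : Type*} (a b : X) (hab : a ≠ b)
    (α β γ δ ε : FreeGroup X)
    (hαa : FreeGroup.Avoids a α) (hβa : FreeGroup.Avoids a β) (hγa : FreeGroup.Avoids a γ)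
    (hδa : FreeGroup.Avoids a δ) (hεa : FreeGroup.Avoids a ε)
    (hαb : FreeGroup.Avoids b α) (hβb : FreeGroup.Avoids b β) (hγb : FreeGroup.Avoids b γ)
    (hδb : FreeGroup.Avoids b δ) (hεb : FreeGroup.Avoids b ε) :
    Nonempty
      ((FreeGroup X ⧸ Subgroup.normalClosure
          {α * FreeGroup.of a * β * FreeGroup.of b * γ * (FreeGroup.of a)⁻¹ * δ
            * (FreeGroup.of b)⁻¹ * ε}) ≃*
       (FreeGroup X ⧸ Subgroup.normalClosure
          {FreeGroup.of a * FreeGroup.of b * (FreeGroup.of a)⁻¹ * (FreeGroup.of b)⁻¹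
            * ε * α * δ * γ * β})) := by
  classical
  set r₁ := α * FreeGroup.of a * β * FreeGroup.of b * γ * (FreeGroup.of a)⁻¹ * δ
      * (FreeGroup.of b)⁻¹ * ε with hr₁
  set r₂ := FreeGroup.of a * FreeGroup.of b * (FreeGroup.of a)⁻¹ * (FreeGroup.of b)⁻¹
      * ε * α * δ * γ * β with hr₂
  have hba : b ≠ a := hab.symm
  -- the three elementary automorphisms
  let Φ₁ := TorusExtraction.elemAut a α⁻¹ β⁻¹ (Subgroup.inv_mem _ hαa) (Subgroup.inv_mem _ hβa)
  let Φ₂ := TorusExtraction.elemAut b 1 (γ * β)⁻¹ (Subgroup.one_mem _)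
    (Subgroup.inv_mem _ (Subgroup.mul_mem _ hγb hβb))
  let Φ₃ := TorusExtraction.elemAut a (α * δ * γ * β) 1
    (Subgroup.mul_mem _ (Subgroup.mul_mem _ (Subgroup.mul_mem _ hαa hδa) hγa) hβa)
    (Subgroup.one_mem _)
  let Φ : FreeGroup X ≃* FreeGroup X := Φ₁.trans (Φ₂.trans Φ₃)
  have hΦ : Φ r₁ = (α * δ * γ * β) * r₂ * (α * δ * γ * β)⁻¹ := by
    show TorusExtraction.elemMap a (α * δ * γ * β) 1
        (TorusExtraction.elemMap b 1 (γ * β)⁻¹ (TorusExtraction.elemMap a α⁻¹ β⁻¹ r₁)) = _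
    rw [hr₁, hr₂]
    simp only [MonoidHom.map_mul, MonoidHom.map_inv, TorusExtraction.elemMap_of_self,
      TorusExtraction.elemMap_of_ne a _ _ hba, TorusExtraction.elemMap_of_ne b _ _ hab,
      TorusExtraction.elemMap_fix α⁻¹ β⁻¹ hαa, TorusExtraction.elemMap_fix α⁻¹ β⁻¹ hβa, TorusExtraction.elemMap_fix α⁻¹ β⁻¹ hγa,
      TorusExtraction.elemMap_fix α⁻¹ β⁻¹ hδa, TorusExtraction.elemMap_fix α⁻¹ β⁻¹ hεa,
      TorusExtraction.elemMap_fix 1 (γ * β)⁻¹ hαb, TorusExtraction.elemMap_fix 1 (γ * β)⁻¹ hβb, TorusExtraction.elemMap_fix 1 (γ * β)⁻¹ hγb,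
      TorusExtraction.elemMap_fix 1 (γ * β)⁻¹ hδb, TorusExtraction.elemMap_fix 1 (γ * β)⁻¹ hεb,
      TorusExtraction.elemMap_fix (α * δ * γ * β) 1 hαa, TorusExtraction.elemMap_fix (α * δ * γ * β) 1 hβa,
      TorusExtraction.elemMap_fix (α * δ * γ * β) 1 hγa, TorusExtraction.elemMap_fix (α * δ * γ * β) 1 hδa,
      TorusExtraction.elemMap_fix (α * δ * γ * β) 1 hεa, map_one]
    group
  refine ⟨QuotientGroup.congr _ _ Φ ?_⟩
  rw [Subgroup.map_normalClosure _ _ Φ.surjective, Set.image_singleton,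
    show (↑Φ : FreeGroup X →* FreeGroup X) r₁ = Φ r₁ from rfl, hΦ, TorusExtraction.normalClosure_conj]
end

section
/- Let a = FreeGroup.of 0, b = FreeGroup.of 1, c = FreeGroup.of 2 in FreeGroup (Fin 3). Then the quotient of FreeGroup (Fin 3) by the normal closure of {a * a * b * c * b⁻¹ * c⁻¹} is isomorphic to the quotient of FreeGroup (Fin 3) by the normal closure of {a * a * b * b * c * c}. (Example (ii), Dyck's theorem: ℙ # 𝕋 ≅ ℙ # ℙ # ℙ.) -/
open FreeGroup Subgroup

private def dyckφ : FreeGroup (Fin 3) →* FreeGroup (Fin 3) :=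
  FreeGroup.lift ![of 1 * of 2 * of 0, (of 0)⁻¹ * (of 2)⁻¹, of 1 * of 2]

private def dyckψ : FreeGroup (Fin 3) →* FreeGroup (Fin 3) :=
  FreeGroup.lift ![(of 2)⁻¹ * of 0, of 0 * of 1, (of 1)⁻¹ * (of 0)⁻¹ * of 2]

private def dycke : FreeGroup (Fin 3) ≃* FreeGroup (Fin 3) :=
  { toFun := dyckφ
    invFun := dyckψ
    left_inv := by
      have h : dyckψ.comp dyckφ = MonoidHom.id _ := by
        apply FreeGroup.ext_hom
        intro a
        fin_cases a <;> simp [dyckφ, dyckψ] <;> group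
      intro x
      exact DFunLike.congr_fun h x
    right_inv := by
      have h : dyckφ.comp dyckψ = MonoidHom.id _ := by
        apply FreeGroup.ext_hom
        intro a
        fin_cases a <;> simp [dyckφ, dyckψ] <;> group
      intro x
      exact DFunLike.congr_fun h x
    map_mul' := map_mul dyckφ }

private theorem dyck_conj :
    dyckφ (FreeGroup.of 0 * FreeGroup.of 0 * FreeGroup.of 1 * FreeGroup.of 2
        * (FreeGroup.of 1 : FreeGroup (Fin 3))⁻¹ * (FreeGroup.of 2)⁻¹)
      = (of 1 * of 2 * (of 0)⁻¹)
        * (FreeGroup.of 0 * FreeGroup.of 0 * FreeGroup.of 1 * FreeGroup.of 1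
            * FreeGroup.of 2 * FreeGroup.of 2)
        * (of 1 * of 2 * (of 0)⁻¹)⁻¹ := by
  simp [dyckφ]
  group

/-- Example (ii), Dyck's theorem: `ℙ # 𝕋 ≅ ℙ # ℙ # ℙ`, at the level of one-relator
quotients of the free group on three letters. -/
theorem dyck :
    Nonempty
      ((FreeGroup (Fin 3) ⧸ Subgroup.normalClosure
          {FreeGroup.of 0 * FreeGroup.of 0 * FreeGroup.of 1 * FreeGroup.of 2
            * (FreeGroup.of 1)⁻¹ * (FreeGroup.of 2)⁻¹}) ≃*
       (FreeGroup (Fin 3) ⧸ Subgroup.normalClosure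
          {FreeGroup.of 0 * FreeGroup.of 0 * FreeGroup.of 1 * FreeGroup.of 1
            * FreeGroup.of 2 * FreeGroup.of 2})) := by
  set u : FreeGroup (Fin 3) := FreeGroup.of 0 * FreeGroup.of 0 * FreeGroup.of 1 * FreeGroup.of 2
      * (FreeGroup.of 1)⁻¹ * (FreeGroup.of 2)⁻¹ with hu
  set v : FreeGroup (Fin 3) := FreeGroup.of 0 * FreeGroup.of 0 * FreeGroup.of 1 * FreeGroup.of 1
      * FreeGroup.of 2 * FreeGroup.of 2 with hv
  have hmap : (Subgroup.normalClosure {u}).map dycke.toMonoidHom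
      = Subgroup.normalClosure {v} := by
    rw [Subgroup.map_normalClosure {u} dycke.toMonoidHom (MulEquiv.surjective dycke), Set.image_singleton]
    have h1 : (dycke.toMonoidHom u : FreeGroup (Fin 3))
        = (of 1 * of 2 * (of 0)⁻¹) * v * (of 1 * of 2 * (of 0)⁻¹)⁻¹ := dyck_conj
    apply le_antisymm
    · apply Subgroup.normalClosure_le_normal
      rw [Set.singleton_subset_iff, h1]
      exact Subgroup.normalClosure_normal.conj_mem v
        (Subgroup.subset_normalClosure (Set.mem_singleton v)) _
    · apply Subgroup.normalClosure_le_normal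
      rw [Set.singleton_subset_iff]
      have : v = (of 1 * of 2 * (of 0)⁻¹)⁻¹ * (dycke.toMonoidHom u) * ((of 1 * of 2 * (of 0)⁻¹)⁻¹)⁻¹ := by
        rw [h1]; group
      rw [this]
      exact Subgroup.normalClosure_normal.conj_mem _
        (Subgroup.subset_normalClosure (Set.mem_singleton _)) _
  exact ⟨QuotientGroup.congr _ _ dycke hmap⟩
end

section
/- Let n ≥ 1 and for i : Fin n write aᵢ = FreeGroup.of i in FreeGroup (Fin n). Then the quotient of FreeGroup (Fin n) by the normal closure of {(a₀ * a₁ * ⋯ * aₙ₋₂ * aₙ₋₁) * (a₀⁻¹ * a₁⁻¹ * ⋯ * aₙ₋₂⁻¹) * aₙ₋₁} is isomorphic to the quotient of FreeGroup (Fin n) by the normal closure of {a₀² * a₁² * ⋯ * aₙ₋₁²}. (Example (iv): the word a₁a₂⋯aₙ₋₁aₙ ā₁ā₂⋯āₙ₋₁aₙ represents ℙ^{#n}.) -/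
/-!
Write `Pᵢ = a₀ ⋯ aᵢ₋₁`. The endomorphism `τ` of the free group with `τ aᵢ = Pᵢ aᵢ⁻¹ Pᵢ⁻¹` for
`i < n - 1` and `τ aₙ₋₁ = Pₙ` satisfies `τ Pᵢ = Pᵢ⁻¹` for `i < n`, which makes it an involution,
hence an automorphism. The images of the squares telescope, `(τ aᵢ)² = Pᵢ aᵢ⁻¹ Pᵢ₊₁⁻¹`, so
`τ (a₀² ⋯ aₙ₋₁²) = a₀⁻¹ ⋯ aₙ₋₂⁻¹ aₙ₋₁ Pₙ`, a conjugate of the relator `Pₙ a₀⁻¹ ⋯ aₙ₋₂⁻¹ aₙ₋₁`.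
-/

theorem List.prod_ofFn_val_succ {M : Type*} [Monoid M] (f : ℕ → M) (i : ℕ) :
    (List.ofFn fun j : Fin (i + 1) => f j).prod = (List.ofFn fun j : Fin i => f j).prod * f i := by
  rw [List.ofFn_succ', List.prod_concat]
  rfl

theorem IsConj.normalClosure_singleton_eq {G : Type*} [Group G] {x y : G} (h : IsConj x y) :
    Subgroup.normalClosure {x} = Subgroup.normalClosure {y} := by
  have key : ∀ {a b : G}, IsConj a b →
      Subgroup.normalClosure {a} ≤ Subgroup.normalClosure {b} := by
    intro a b hab
    obtain ⟨c, rfl⟩ := isConj_iff.1 hab.symm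
    refine Subgroup.normalClosure_le_normal (Set.singleton_subset_iff.2 ?_)
    exact (Subgroup.normalClosure_normal (s := {b})).conj_mem b
      (Subgroup.subset_normalClosure (Set.mem_singleton b)) c
  exact le_antisymm (key h) (key h.symm)

def MulEquiv.quotientNormalClosureSingletonCongr {G H : Type*} [Group G] [Group H] (e : G ≃* H)
    {x : G} {y : H} (h : IsConj (e x) y) :
    G ⧸ Subgroup.normalClosure {x} ≃* H ⧸ Subgroup.normalClosure {y} :=
  QuotientGroup.congr _ _ e <| by
    rw [Subgroup.map_normalClosure _ _ e.surjective, Set.image_singleton]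
    exact h.normalClosure_singleton_eq

namespace ProjectiveSum

variable {n : ℕ}

def gen (n j : ℕ) : FreeGroup (Fin n) := if h : j < n then FreeGroup.of ⟨j, h⟩ else 1

def prefixProd (n i : ℕ) : FreeGroup (Fin n) := (List.ofFn fun j : Fin i => gen n j).prod

def prefixInvProd (n i : ℕ) : FreeGroup (Fin n) := (List.ofFn fun j : Fin i => (gen n j)⁻¹).prod

def prefixSqProd (n i : ℕ) : FreeGroup (Fin n) :=
  (List.ofFn fun j : Fin i => gen n j * gen n j).prod

def involution (n : ℕ) : FreeGroup (Fin n) →* FreeGroup (Fin n) :=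
  FreeGroup.lift fun i => if (i : ℕ) + 1 = n then prefixProd n i * FreeGroup.of i
    else prefixProd n i * (FreeGroup.of i)⁻¹ * (prefixProd n i)⁻¹

theorem of_eq_gen (i : Fin n) : FreeGroup.of i = gen n i := by
  simp [gen]

theorem prefixProd_succ (i : ℕ) : prefixProd n (i + 1) = prefixProd n i * gen n i :=
  List.prod_ofFn_val_succ _ i

theorem prefixInvProd_succ (i : ℕ) :
    prefixInvProd n (i + 1) = prefixInvProd n i * (gen n i)⁻¹ :=
  List.prod_ofFn_val_succ (fun j => (gen n j)⁻¹) i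

theorem prefixSqProd_succ (i : ℕ) :
    prefixSqProd n (i + 1) = prefixSqProd n i * gen n i * gen n i :=
  (List.prod_ofFn_val_succ (fun j => gen n j * gen n j) i).trans (mul_assoc _ _ _).symm

theorem involution_gen {j : ℕ} (hj : j + 1 < n) :
    involution n (gen n j) = prefixProd n j * (gen n j)⁻¹ * (prefixProd n j)⁻¹ := by
  rw [gen, dif_pos (by omega), involution, FreeGroup.lift_apply_of, if_neg (by simp; omega),
    of_eq_gen]

theorem involution_gen_last {j : ℕ} (hj : j + 1 = n) :
    involution n (gen n j) = prefixProd n (j + 1) := by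
  rw [gen, dif_pos (by omega), involution, FreeGroup.lift_apply_of, if_pos hj, of_eq_gen,
    prefixProd_succ]

theorem involution_prefixProd {i : ℕ} (hi : i < n) :
    involution n (prefixProd n i) = (prefixProd n i)⁻¹ := by
  induction i with
  | zero => simp [prefixProd]
  | succ i ih =>
    rw [prefixProd_succ, map_mul, ih (by omega), involution_gen hi]
    group

theorem involutive_involution : Function.Involutive (involution n) := by
  suffices (involution n).comp (involution n) = MonoidHom.id _ from DFunLike.congr_fun this
  refine FreeGroup.ext_hom _ _ fun i => ?_
  have hi := i.isLt
  simp only [MonoidHom.comp_apply, MonoidHom.id_apply, of_eq_gen]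
  by_cases hlast : (i : ℕ) + 1 = n
  · rw [involution_gen_last hlast, prefixProd_succ, map_mul, involution_prefixProd (by omega),
      involution_gen_last hlast, prefixProd_succ]
    group
  · rw [involution_gen (by omega), map_mul, map_mul, map_inv, map_inv, involution_prefixProd hi,
      involution_gen (by omega)]
    group

theorem involution_prefixSqProd {i : ℕ} (hi : i < n) :
    involution n (prefixSqProd n i) = prefixInvProd n i * (prefixProd n i)⁻¹ := by
  induction i with
  | zero => simp [prefixSqProd, prefixInvProd, prefixProd]
  | succ i ih =>
    rw [prefixSqProd_succ, map_mul, map_mul, ih (by omega), involution_gen hi, prefixInvProd_succ,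
      prefixProd_succ]
    group

theorem isConj_involution_prefixSqProd (hn : 1 ≤ n) :
    IsConj (prefixProd n n * prefixInvProd n (n - 1) * gen n (n - 1))
      (involution n (prefixSqProd n n)) := by
  obtain ⟨m, rfl⟩ : ∃ m, n = m + 1 := ⟨n - 1, by omega⟩
  refine isConj_iff.2 ⟨(prefixProd (m + 1) (m + 1))⁻¹, ?_⟩
  rw [prefixSqProd_succ, map_mul, map_mul, involution_prefixSqProd (by omega),
    involution_gen_last rfl, prefixProd_succ, Nat.add_sub_cancel]
  group

end ProjectiveSum

open ProjectiveSum in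
/-- Example (iv): the word `a₁a₂⋯aₙ₋₁aₙ ā₁ā₂⋯āₙ₋₁ aₙ` represents the connected sum of
`n` projective planes `ℙ^{#n}`. -/
theorem example_iv_iso_projective_sum (n : ℕ) (hn : 1 ≤ n) :
    Nonempty
      ((FreeGroup (Fin n) ⧸ Subgroup.normalClosure
          {(List.ofFn fun i : Fin n => FreeGroup.of i).prod *
           (List.ofFn fun i : Fin (n - 1) =>
              (FreeGroup.of (Fin.castLE (Nat.sub_le n 1) i))⁻¹).prod *
           FreeGroup.of (⟨n - 1, by omega⟩ : Fin n)}) ≃*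
       (FreeGroup (Fin n) ⧸ Subgroup.normalClosure
          {(List.ofFn fun i : Fin n => FreeGroup.of i * FreeGroup.of i).prod})) := by
  rw [show (FreeGroup.of : Fin n → _) = fun i : Fin n => gen n i from funext of_eq_gen]
  simp only [Fin.val_castLE]
  let e := MulEquiv.ofBijective _ (involutive_involution (n := n)).bijective
  exact ⟨(e.quotientNormalClosureSingletonCongr (isConj_involution_prefixSqProd hn).symm).symm⟩
end

section
/- Let n : ℕ and for i : Fin (2*n) write aᵢ = FreeGroup.of i in FreeGroup (Fin (2*n)). Then the quotient of FreeGroup (Fin (2*n)) by the normal closure of {(a₀ * a₁ * ⋯ * a₂ₙ₋₁) * (a₀⁻¹ * a₁⁻¹ * ⋯ * a₂ₙ₋₁⁻¹)} is isomorphic to the quotient of FreeGroup (Fin (2*n)) by the normal closure of {∏_{i<n} (a₂ᵢ * a₂ᵢ₊₁ * a₂ᵢ⁻¹ * a₂ᵢ₊₁⁻¹)} (the product of commutators taken in increasing order of i). (Example (v) for an even number of letters: the word a₁⋯a₂ₙā₁⋯ā₂ₙ represents the connected sum of n tori 𝕋^{#n}.) -/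
/-!
Cutting the surface word `a₀ a₁ ⋯ a₂ₙ₋₁ a₀⁻¹ ⋯ a₂ₙ₋₁⁻¹` into handles: writing it as
`x y s x⁻¹ y⁻¹ t` with `x = a₀`, `y = a₁` and `s`, `t` words in the remaining letters, the
automorphism `x ↦ x y⁻¹ s`, `y ↦ s⁻¹ y` of the free group turns it into `⁅x, y⁆ s t`, and
`s t` is the same kind of word on two fewer letters. Composing these automorphisms carries the
relator to the product of commutators, hence identifies the two one-relator quotients.
-/

open Subgroup
open scoped commutatorElement

theorem List.ofFn_fin_two_mul {β : Type*} {n : ℕ} (f : Fin (2 * n) → β) :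
    List.ofFn f = (List.ofFn fun i : Fin n =>
      [f ⟨2 * i, by have := i.2; omega⟩, f ⟨2 * i + 1, by have := i.2; omega⟩]).flatten := by
  simp [List.ofFn_mul' f, List.ofFn_succ]

def QuotientGroup.congrNormalClosure {G H : Type*} [Group G] [Group H] (e : G ≃* H)
    {s : Set G} {t : Set H} (h : e '' s = t) :
    G ⧸ normalClosure s ≃* H ⧸ normalClosure t :=
  QuotientGroup.congr _ _ e (by rw [← h]; exact map_normalClosure s e.toMonoidHom e.surjective)

namespace FreeGroup

variable {α : Type*}

section transvection

variable [DecidableEq α]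

theorem lift_update_of_apply_of_mem_closure {a : α} (x : FreeGroup α) {w : FreeGroup α}
    (hw : w ∈ closure (of '' {a}ᶜ)) : lift (Function.update of a x) w = w := by
  refine MonoidHom.eqOn_closure (g := MonoidHom.id _) ?_ hw
  rintro _ ⟨b, hb, rfl⟩
  simp [Function.update_of_ne hb]

def transvection (a : α) {g h : FreeGroup α} (hg : g ∈ closure (of '' {a}ᶜ))
    (hh : h ∈ closure (of '' {a}ᶜ)) : FreeGroup α ≃* FreeGroup α :=
  MonoidHom.toMulEquiv (lift (Function.update of a (g * of a * h)))
    (lift (Function.update of a (g⁻¹ * of a * h⁻¹)))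
    (ext_hom _ _ fun b => by
      rcases eq_or_ne b a with rfl | hb
      · simp [lift_update_of_apply_of_mem_closure _ hg, lift_update_of_apply_of_mem_closure _ hh]
        group
      · simp [Function.update_of_ne hb])
    (ext_hom _ _ fun b => by
      rcases eq_or_ne b a with rfl | hb
      · simp [lift_update_of_apply_of_mem_closure _ (inv_mem hg),
          lift_update_of_apply_of_mem_closure _ (inv_mem hh)]
        group
      · simp [Function.update_of_ne hb])

variable {a : α} {g h : FreeGroup α} (hg : g ∈ closure (of '' {a}ᶜ))
    (hh : h ∈ closure (of '' {a}ᶜ))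

@[simp]
theorem transvection_of_self : transvection a hg hh (of a) = g * of a * h := by
  simp [transvection]

theorem transvection_of_of_ne {b : α} (hb : b ≠ a) : transvection a hg hh (of b) = of b := by
  simp [transvection, Function.update_of_ne hb]

theorem transvection_apply_of_mem_closure {w : FreeGroup α} (hw : w ∈ closure (of '' {a}ᶜ)) :
    transvection a hg hh w = w :=
  lift_update_of_apply_of_mem_closure _ hw

end transvection

theorem exists_mulEquiv_apply_eq_commutator_mul {x y : α} (hxy : x ≠ y) {s t : FreeGroup α}
    (hs : s ∈ closure (of '' {x, y}ᶜ)) (ht : t ∈ closure (of '' {x, y}ᶜ)) :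
    ∃ e : FreeGroup α ≃* FreeGroup α, (∀ z, z ≠ x → z ≠ y → e (of z) = of z) ∧
      e (of x * of y * s * ((of x)⁻¹ * (of y)⁻¹ * t)) = ⁅of x, of y⁆ * (s * t) := by
  classical
  have hsub : ∀ z ∈ ({x, y} : Set α), closure (of '' {x, y}ᶜ) ≤ closure (of '' {z}ᶜ) :=
    fun z hz => closure_mono (Set.image_mono (by simpa using hz))
  have hy : (of y)⁻¹ ∈ closure (of '' {x}ᶜ) := inv_mem (subset_closure ⟨y, hxy.symm, rfl⟩)
  let e := (transvection x (one_mem _) hy).trans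
    (transvection y (inv_mem (hsub y (by simp) hs)) (one_mem _))
  have hfix : ∀ w ∈ closure (of '' {x, y}ᶜ), e w = w := fun w hw => by
    simp [e, transvection_apply_of_mem_closure _ _ (hsub x (by simp) hw),
      transvection_apply_of_mem_closure _ _ (hsub y (by simp) hw)]
  refine ⟨e, fun z hzx hzy => ?_, ?_⟩
  · simp [e, transvection_of_of_ne _ _ hzx, transvection_of_of_ne _ _ hzy]
  · have hex : e (of x) = of x * (of y)⁻¹ * s := by
      simp [e, transvection_of_of_ne _ _ hxy, mul_assoc]
    have hey : e (of y) = s⁻¹ * of y := by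
      simp [e, transvection_of_of_ne _ _ hxy.symm]
    simp only [_root_.map_mul, _root_.map_inv, hex, hey, hfix s hs, hfix t ht,
      commutatorElement_def]
    group

theorem exists_mulEquiv_prod_mul_prod_inv_eq_prod_commutator (l : List (α × α))
    (hl : (l.flatMap fun p => [p.1, p.2]).Nodup) :
    ∃ e : FreeGroup α ≃* FreeGroup α,
      (∀ a ∉ l.flatMap fun p => [p.1, p.2], e (of a) = of a) ∧
      e ((l.map fun p => of p.1 * of p.2).prod * (l.map fun p => (of p.1)⁻¹ * (of p.2)⁻¹).prod) =
        (l.map fun p => ⁅of p.1, of p.2⁆).prod := by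
  induction l with
  | nil => exact ⟨MulEquiv.refl _, fun _ _ => rfl, by simp⟩
  | cons p r ih =>
    obtain ⟨x, y⟩ := p
    simp only [List.flatMap_cons, List.cons_append, List.nil_append, List.nodup_cons,
      List.mem_cons, not_or] at hl
    obtain ⟨⟨hxy, hxr⟩, hyr, hr⟩ := hl
    obtain ⟨e, he_fix, he⟩ := ih hr
    have hK : ∀ a ∈ r.flatMap fun p => [p.1, p.2], of a ∈ closure (of '' {x, y}ᶜ) :=
      fun a ha => subset_closure ⟨a, by
        rintro (rfl | rfl : a = x ∨ a = y)
        exacts [hxr ha, hyr ha], rfl⟩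
    have hpair : ∀ p ∈ r, of p.1 ∈ closure (of '' {x, y}ᶜ) ∧ of p.2 ∈ closure (of '' {x, y}ᶜ) :=
      fun p hp => ⟨hK _ (List.mem_flatMap.2 ⟨p, hp, by simp⟩),
        hK _ (List.mem_flatMap.2 ⟨p, hp, by simp⟩)⟩
    obtain ⟨φ, hφ_fix, hφ⟩ := exists_mulEquiv_apply_eq_commutator_mul hxy
      (list_prod_mem (l := r.map fun p => of p.1 * of p.2) (List.forall_mem_map.2
        fun p hp => mul_mem (hpair p hp).1 (hpair p hp).2))
      (list_prod_mem (l := r.map fun p => (of p.1)⁻¹ * (of p.2)⁻¹) (List.forall_mem_map.2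
        fun p hp => mul_mem (inv_mem (hpair p hp).1) (inv_mem (hpair p hp).2)))
    refine ⟨φ.trans e, fun a ha => ?_, ?_⟩
    · simp only [List.flatMap_cons, List.cons_append, List.nil_append, List.mem_cons, not_or] at ha
      simp [hφ_fix a ha.1 ha.2.1, he_fix a ha.2.2]
    · rw [List.map_cons, List.map_cons, List.map_cons, List.prod_cons, List.prod_cons,
        List.prod_cons, MulEquiv.trans_apply, hφ, _root_.map_mul, he, map_commutatorElement,
        he_fix x hxr, he_fix y hyr]

end FreeGroup

/-- Example (v) for an even number of letters: the word `a₁⋯a₂ₙ ā₁⋯ā₂ₙ` represents the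
connected sum of `n` tori `𝕋^{#n}`. -/
theorem example_v_iso_torus_sum (n : ℕ) :
    Nonempty
      ((FreeGroup (Fin (2 * n)) ⧸ Subgroup.normalClosure
          {(List.ofFn fun i : Fin (2 * n) => FreeGroup.of i).prod *
           (List.ofFn fun i : Fin (2 * n) => (FreeGroup.of i)⁻¹).prod}) ≃*
       (FreeGroup (Fin (2 * n)) ⧸ Subgroup.normalClosure
          {(List.ofFn fun i : Fin n =>
              FreeGroup.of (⟨2 * i.val, by omega⟩ : Fin (2 * n)) *
              FreeGroup.of (⟨2 * i.val + 1, by omega⟩ : Fin (2 * n)) *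
              (FreeGroup.of (⟨2 * i.val, by omega⟩ : Fin (2 * n)))⁻¹ *
              (FreeGroup.of (⟨2 * i.val + 1, by omega⟩ : Fin (2 * n)))⁻¹).prod})) := by
  let handles : List (Fin (2 * n) × Fin (2 * n)) :=
    List.ofFn fun i : Fin n => (⟨2 * i, by omega⟩, ⟨2 * i + 1, by omega⟩)
  have hletters : (handles.flatMap fun p => [p.1, p.2]) = List.ofFn id := by
    simp [handles, List.ofFn_fin_two_mul id, List.flatMap, List.map_ofFn, Function.comp_def]
  obtain ⟨e, -, he⟩ := FreeGroup.exists_mulEquiv_prod_mul_prod_inv_eq_prod_commutator handles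
    (hletters ▸ List.nodup_ofFn_ofInjective Function.injective_id)
  refine ⟨QuotientGroup.congrNormalClosure e ?_⟩
  rw [Set.image_singleton, List.ofFn_fin_two_mul,
    List.ofFn_fin_two_mul (fun i => (FreeGroup.of i)⁻¹)]
  simpa [handles, List.map_ofFn, Function.comp_def, List.prod_flatten, commutatorElement_def]
    using he
end

section
/- Invariance of orientability: let X be a type and let w, w' be polygon words over X with w ∼ w'. Then w contains a concord pair if and only if w' contains a concord pair. Equivalently, having only discord pairs is invariant under the equivalence ∼ of combinatorial polygons; a combinatorial polygon gives an orientable surface if and only if no concord letters occur in any word representing it. -/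
/-!
A word has a concord pair exactly when some signed entry is repeated, i.e. when it is not
duplicate-free. Cyclicity and the discord rule permute the entries, inversion maps them by an
injective map, and cancellation removes a discord pair of a letter occurring nowhere else, so all
of these preserve duplicate-freeness; both sides of the concord rule repeat the entry `(a, s)`.
-/

namespace Surface

/-- A signed word over `X`: the entry `(a, true)` represents the edge `a`, and
`(a, false)` represents its inverse `ā`. -/
abbrev Word (X : Type*) := List (X × Bool)

/-- The inverse of a signed word: reverse it and negate every `Bool`. -/
def wordInv {X : Type*} (w : Word X) : Word X :=
  (w.map fun p => (p.1, !p.2)).reverse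

/-- The letter `a` occurs in the signed word `w`. -/
def Occurs {X : Type*} (a : X) (w : Word X) : Prop :=
  ∃ s : Bool, (a, s) ∈ w

/-- A polygon word: every letter that occurs, occurs exactly twice (counting `(a,true)`
and `(a,false)` together). -/
def IsPolygon {X : Type*} [DecidableEq X] (w : Word X) : Prop :=
  ∀ a : X, Occurs a w → (w.map Prod.fst).count a = 2

/-- The smallest equivalence relation on signed words closed under cyclicity, inversion,
cancellation, the discord rule and the concord rule. -/
inductive WEquiv {X : Type*} : Word X → Word X → Prop
  | refl (w : Word X) : WEquiv w w
  | symm {w v : Word X} : WEquiv w v → WEquiv v w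
  | trans {w v u : Word X} : WEquiv w v → WEquiv v u → WEquiv w u
  /-- (1) cyclicity -/
  | cyc (α : Word X) (x : X × Bool) : WEquiv (α ++ [x]) ([x] ++ α)
  /-- (2) inversion -/
  | inv (w : Word X) : WEquiv w (wordInv w)
  /-- (3) cancellation -/
  | cancel (α : Word X) (a : X) (s : Bool) (hα : ¬ Occurs a α) :
      WEquiv (α ++ [(a, s), (a, !s)]) α
  /-- (4) discord rule -/
  | discord (α β β' : Word X) (a : X) (s : Bool)
      (hα : ¬ Occurs a α) (hβ : ¬ Occurs a β) (hβ' : ¬ Occurs a β') :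
      WEquiv (α ++ [(a, s)] ++ β ++ β' ++ [(a, !s)])
             (α ++ [(a, s)] ++ β' ++ β ++ [(a, !s)])
  /-- (5) concord rule -/
  | concord (α β : Word X) (a : X) (s : Bool)
      (hα : ¬ Occurs a α) (hβ : ¬ Occurs a β) :
      WEquiv (α ++ [(a, s)] ++ β ++ [(a, s)])
             (α ++ wordInv β ++ [(a, s), (a, s)])

/-- The word `a₁a₁a₂a₂⋯aₖaₖ`, representing the connected sum of `k` projective planes. -/
def PWord {X : Type*} {k : ℕ} (a : Fin k → X) : Word X :=
  (List.ofFn fun i => [(a i, true), (a i, true)]).flatten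

/-- The word `a₁b₁ā₁b̄₁⋯aₙbₙāₙb̄ₙ`, representing the connected sum of `n` tori. -/
def TWord {X : Type*} {n : ℕ} (a b : Fin n → X) : Word X :=
  (List.ofFn fun i => [(a i, true), (b i, true), (a i, false), (b i, false)]).flatten

/-- `w` contains a concord pair: some letter occurs twice with the same sign. -/
def HasConcordPair {X : Type*} (w : Word X) : Prop :=
  ∃ (a : X) (s : Bool) (α β γ : Word X),
    w = α ++ [(a, s)] ++ β ++ [(a, s)] ++ γ

/-- `w` contains two interleaved pairs: letters `a ≠ b` occurring in the pattern
`⋯a⋯b⋯a⋯b⋯`. -/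
def HasInterleaved {X : Type*} (w : Word X) : Prop :=
  ∃ (a b : X) (s s' t t' : Bool) (α β γ δ ε : Word X), a ≠ b ∧
    w = α ++ [(a, s)] ++ β ++ [(b, t)] ++ γ ++ [(a, s')] ++ δ ++ [(b, t')] ++ ε

theorem _root_.List.pair_sublist_iff {A : Type*} {p : A} {l : List A} :
    [p, p].Sublist l ↔ ∃ α β γ : List A, l = α ++ [p] ++ β ++ [p] ++ γ := by
  constructor
  · intro h
    obtain ⟨r₁, r₂, rfl, h₁, h₂⟩ := List.cons_sublist_iff.mp h
    obtain ⟨α, β₁, rfl⟩ := List.append_of_mem h₁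
    obtain ⟨β₂, γ, rfl⟩ := List.append_of_mem (List.singleton_sublist.mp h₂)
    exact ⟨α, β₁ ++ β₂, γ, by simp⟩
  · rintro ⟨α, β, γ, rfl⟩
    simp

theorem hasConcordPair_iff_not_nodup {X : Type*} {w : Word X} :
    HasConcordPair w ↔ ¬ w.Nodup := by
  simp only [List.nodup_iff_sublist, not_forall, not_not, List.pair_sublist_iff,
    HasConcordPair, Prod.exists]

theorem nodup_wordInv_iff {X : Type*} {w : Word X} : (wordInv w).Nodup ↔ w.Nodup := by
  have hinv : Function.Involutive fun p : X × Bool => (p.1, !p.2) := fun _ => by simp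
  rw [wordInv, List.nodup_reverse, List.nodup_map_iff hinv.injective]

theorem nodup_append_discord_iff {X : Type*} {α : Word X} {a : X} (s : Bool)
    (hα : ¬ Occurs a α) : (α ++ [(a, s), (a, !s)]).Nodup ↔ α.Nodup := by
  have hdisjoint : ∀ x ∈ α, ∀ y ∈ [(a, s), (a, !s)], x ≠ y := by
    rintro x hx y hy rfl
    simp only [List.mem_cons, List.not_mem_nil, or_false] at hy
    rcases hy with rfl | rfl <;> exact hα ⟨_, hx⟩
  have hpair : [(a, s), (a, !s)].Nodup := by simp
  rw [List.nodup_append]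
  exact ⟨And.left, fun hnodup => ⟨hnodup, hpair, hdisjoint⟩⟩

theorem WEquiv.nodup_iff {X : Type*} {w w' : Word X} (h : WEquiv w w') :
    w.Nodup ↔ w'.Nodup := by
  induction h with
  | refl => rfl
  | symm _ ih => exact ih.symm
  | trans _ _ ih₁ ih₂ => exact ih₁.trans ih₂
  | cyc => exact List.perm_append_comm.nodup_iff
  | inv => exact nodup_wordInv_iff.symm
  | cancel _ _ s hα => exact nodup_append_discord_iff s hα
  | discord α β β' a s =>
    refine List.Perm.nodup_iff ?_
    have hswap : (β ++ β' ++ [(a, !s)]).Perm (β' ++ β ++ [(a, !s)]) :=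
      List.perm_append_comm.append_right _
    simpa only [List.append_assoc] using (hswap.append_left _).append_left α
  | concord α β a s =>
    exact iff_of_false (hasConcordPair_iff_not_nodup.mp ⟨a, s, α, β, [], by simp⟩)
      (hasConcordPair_iff_not_nodup.mp ⟨a, s, α ++ wordInv β, [], [], by simp⟩)

theorem orientability_invariant_general {X : Type*}
    (w w' : Word X) (h : WEquiv w w') :
    HasConcordPair w ↔ HasConcordPair w' := by
  rw [hasConcordPair_iff_not_nodup, hasConcordPair_iff_not_nodup]
  exact not_congr h.nodup_iff

/-- Invariance of orientability: containing a concord pair is invariant under the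
equivalence of combinatorial polygons. -/
theorem orientability_invariant {X : Type*} [DecidableEq X]
    (w w' : Word X) (hw : IsPolygon w) (hw' : IsPolygon w') (h : WEquiv w w') :
    HasConcordPair w ↔ HasConcordPair w' :=
  orientability_invariant_general w w' h

end Surface
end

section
/- Step (a) of the classification proof: let X be a type and let w be a polygon word over X. Then there exist k : ℕ, pairwise distinct letters a₁, …, aₖ : X, and a polygon word w' over X in which every pair is discord and in which none of a₁, …, aₖ occurs, such that w ∼ [(a₁,true),(a₁,true),…,(aₖ,true),(aₖ,true)] ++ w'. (All occurrences of projective planes can be hived off, leaving a word with only discord letters.) -/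
namespace Surface

/-!
Repeatedly apply the concord rule to a concord pair `a ⋯ a`, which turns it into an adjacent
pair `aa` and shortens the rest of the word by two letters. The pairs collected so far form a
block `c₁c₁⋯cₘcₘ` at the front of the word. A new pair `aa` can be moved next to the last pair
`cₘcₘ` of the block, because in a word `xx A yy B` the pair `yy` may jump over `A`; and the
sign of an isolated pair `xx` can always be flipped. The process stops when no concord pair
is left.
-/

section

variable {X : Type*}

local infix:50 " ∼ " => WEquiv

@[simp] lemma wordInv_append (u v : Word X) : wordInv (u ++ v) = wordInv v ++ wordInv u := by
  simp [wordInv]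

@[simp] lemma wordInv_cons (p : X × Bool) (w : Word X) :
    wordInv (p :: w) = wordInv w ++ [(p.1, !p.2)] := by
  simp [wordInv]

@[simp] lemma wordInv_nil : wordInv ([] : Word X) = [] := rfl

@[simp] lemma wordInv_wordInv (w : Word X) : wordInv (wordInv w) = w := by
  induction w with
  | nil => rfl
  | cons p w ih => simp [ih]

@[simp] lemma map_fst_wordInv (w : Word X) :
    (wordInv w).map Prod.fst = (w.map Prod.fst).reverse := by
  simp [wordInv, List.map_reverse, Function.comp_def]

lemma perm_map_fst_wordInv (w : Word X) : ((wordInv w).map Prod.fst).Perm (w.map Prod.fst) := by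
  simp

lemma occurs_iff_mem_map {a : X} {w : Word X} : Occurs a w ↔ a ∈ w.map Prod.fst := by
  simp [Occurs]

@[simp] lemma occurs_nil {a : X} : ¬ Occurs a ([] : Word X) := by simp [Occurs]

@[simp] lemma occurs_cons {a : X} {p : X × Bool} {w : Word X} :
    Occurs a (p :: w) ↔ a = p.1 ∨ Occurs a w := by
  simp [occurs_iff_mem_map]

@[simp] lemma occurs_append {a : X} {u v : Word X} :
    Occurs a (u ++ v) ↔ Occurs a u ∨ Occurs a v := by
  simp [occurs_iff_mem_map]

@[simp] lemma occurs_wordInv {a : X} {w : Word X} : Occurs a (wordInv w) ↔ Occurs a w := by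
  simp [occurs_iff_mem_map]

lemma isPolygon_iff [DecidableEq X] {w : Word X} :
    IsPolygon w ↔ ∀ a ∈ w.map Prod.fst, (w.map Prod.fst).count a = 2 := by
  simp only [IsPolygon, occurs_iff_mem_map]

lemma map_fst_perm_of_concord (α β γ : Word X) (a : X) (s : Bool) :
    ((α ++ [(a, s)] ++ β ++ [(a, s)] ++ γ).map Prod.fst).Perm
      (a :: a :: (α ++ β ++ γ).map Prod.fst) := by
  have h₁ := List.perm_middle (a := a) (l₁ := (α ++ [(a, s)] ++ β).map Prod.fst)
    (l₂ := γ.map Prod.fst)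
  have h₂ := List.perm_middle (a := a) (l₁ := α.map Prod.fst)
    (l₂ := (β ++ γ).map Prod.fst)
  simp only [List.map_append, List.map_cons, List.append_assoc, List.cons_append,
    List.nil_append] at h₁ h₂ ⊢
  exact h₁.trans (h₂.cons a)

lemma IsPolygon.of_perm_cons_cons [DecidableEq X] {u v : Word X} {a : X} (hu : IsPolygon u)
    (h : (u.map Prod.fst).Perm (a :: a :: v.map Prod.fst)) :
    IsPolygon v ∧ ¬ Occurs a v := by
  have hcount (x : X) : (u.map Prod.fst).count x
      = (v.map Prod.fst).count x + if x = a then 2 else 0 := by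
    rw [h.count_eq]
    rcases eq_or_ne a x with rfl | hx <;> simp [*, Ne.symm]
  have ha : ¬ Occurs a v := by
    have := hcount a
    rw [isPolygon_iff.1 hu a (h.mem_iff.2 List.mem_cons_self)] at this
    rw [occurs_iff_mem_map, ← List.count_eq_zero]
    simpa using this
  refine ⟨isPolygon_iff.2 fun x hx => ?_, ha⟩
  have hxa : x ≠ a := by rintro rfl; exact ha (occurs_iff_mem_map.2 hx)
  have := hcount x
  rw [isPolygon_iff.1 hu x (h.mem_iff.2 (by simp [hx]))] at this
  simpa [hxa] using this.symm

instance : Trans (@WEquiv X) (@WEquiv X) (@WEquiv X) := ⟨WEquiv.trans⟩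

lemma WEquiv.rotate (α β : Word X) : α ++ β ∼ β ++ α := by
  induction β generalizing α with
  | nil => simpa using WEquiv.refl α
  | cons x β ih =>
    calc α ++ x :: β = (α ++ [x]) ++ β := by simp
      _ ∼ (β ++ α) ++ [x] := by simpa using ih (α ++ [x])
      _ ∼ [x] ++ (β ++ α) := WEquiv.cyc _ x
      _ = (x :: β) ++ α := by simp

lemma WEquiv.concord_middle (α β γ : Word X) (a : X) (s : Bool)
    (hα : ¬ Occurs a α) (hβ : ¬ Occurs a β) (hγ : ¬ Occurs a γ) :
    α ++ [(a, s)] ++ β ++ [(a, s)] ++ γ ∼ α ++ wordInv β ++ [(a, s), (a, s)] ++ γ :=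
  calc α ++ [(a, s)] ++ β ++ [(a, s)] ++ γ ∼ γ ++ (α ++ [(a, s)] ++ β ++ [(a, s)]) :=
        WEquiv.rotate _ _
    _ = (γ ++ α) ++ [(a, s)] ++ β ++ [(a, s)] := by simp
    _ ∼ (γ ++ α) ++ wordInv β ++ [(a, s), (a, s)] :=
        WEquiv.concord _ β a s (by simp [hγ, hα]) hβ
    _ = γ ++ (α ++ wordInv β ++ [(a, s), (a, s)]) := by simp
    _ ∼ α ++ wordInv β ++ [(a, s), (a, s)] ++ γ := WEquiv.rotate _ _

lemma WEquiv.flip_head_pair (x : X) (s : Bool) (Z : Word X) (hx : ¬ Occurs x Z) :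
    [(x, s), (x, s)] ++ Z ∼ [(x, !s), (x, !s)] ++ Z :=
  calc [(x, s), (x, s)] ++ Z ∼ wordInv ([(x, s), (x, s)] ++ Z) := WEquiv.inv _
    _ = [] ++ wordInv Z ++ [(x, !s), (x, !s)] := by simp
    _ ∼ [] ++ [(x, !s)] ++ Z ++ [(x, !s)] :=
        (WEquiv.concord [] Z x (!s) (by simp) hx).symm
    _ = ([(x, !s)] ++ Z) ++ [(x, !s)] := by simp
    _ ∼ [(x, !s), (x, !s)] ++ Z := WEquiv.cyc _ _

lemma WEquiv.change_pair_sign (α β : Word X) (x : X) (s t : Bool)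
    (hα : ¬ Occurs x α) (hβ : ¬ Occurs x β) :
    α ++ [(x, s), (x, s)] ++ β ∼ α ++ [(x, t), (x, t)] ++ β := by
  obtain rfl | rfl : t = s ∨ t = !s := by cases s <;> cases t <;> simp
  · exact WEquiv.refl _
  calc α ++ [(x, s), (x, s)] ++ β ∼ [(x, s), (x, s)] ++ (β ++ α) := by
        simpa using WEquiv.rotate α ([(x, s), (x, s)] ++ β)
    _ ∼ [(x, !s), (x, !s)] ++ (β ++ α) := WEquiv.flip_head_pair x s _ (by simp [hα, hβ])
    _ ∼ α ++ [(x, !s), (x, !s)] ++ β := by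
        simpa using WEquiv.rotate ([(x, !s), (x, !s)] ++ β) α

lemma WEquiv.gather_pairs (A B : Word X) (x y : X) (s t : Bool) (hxy : x ≠ y)
    (hxA : ¬ Occurs x A) (hxB : ¬ Occurs x B) (hyA : ¬ Occurs y A) (hyB : ¬ Occurs y B) :
    [(x, s), (x, s)] ++ A ++ [(y, t), (y, t)] ++ B ∼
      [(x, s), (x, s)] ++ [(y, t), (y, t)] ++ A ++ B :=
  calc [(x, s), (x, s)] ++ A ++ [(y, t), (y, t)] ++ B
      = [(x, s), (x, s)] ++ wordInv (wordInv A) ++ [(y, t), (y, t)] ++ B := by simp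
    _ ∼ [(x, s), (x, s)] ++ [(y, t)] ++ wordInv A ++ [(y, t)] ++ B :=
        (WEquiv.concord_middle _ _ _ y t (by simp [hxy.symm]) (by simpa using hyA) hyB).symm
    _ = [(x, s)] ++ ([(x, s)] ++ [(y, t)] ++ wordInv A ++ [(y, t)] ++ B) := by simp
    _ ∼ [] ++ [(x, s)] ++ ([(y, t)] ++ wordInv A ++ [(y, t)] ++ B) ++ [(x, s)] := by
        simpa using WEquiv.rotate [(x, s)] ([(x, s)] ++ [(y, t)] ++ wordInv A ++ [(y, t)] ++ B)
    _ ∼ [] ++ wordInv ([(y, t)] ++ wordInv A ++ [(y, t)] ++ B) ++ [(x, s), (x, s)] :=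
        WEquiv.concord _ _ x s (by simp) (by simp [hxy, hxA, hxB])
    _ = (wordInv B ++ [(y, !t)] ++ A) ++ ([(y, !t)] ++ [(x, s), (x, s)]) := by simp
    _ ∼ ([(y, !t)] ++ [(x, s), (x, s)]) ++ (wordInv B ++ [(y, !t)] ++ A) := WEquiv.rotate _ _
    _ = [] ++ [(y, !t)] ++ ([(x, s), (x, s)] ++ wordInv B) ++ [(y, !t)] ++ A := by simp
    _ ∼ [] ++ wordInv ([(x, s), (x, s)] ++ wordInv B) ++ [(y, !t), (y, !t)] ++ A :=
        WEquiv.concord_middle _ _ _ y (!t) (by simp) (by simp [hxy.symm, hyB]) hyA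
    _ = B ++ ([(x, !s), (x, !s)] ++ [(y, !t), (y, !t)] ++ A) := by simp
    _ ∼ [] ++ [(x, !s), (x, !s)] ++ ([(y, !t), (y, !t)] ++ A ++ B) := by
        simpa using WEquiv.rotate B ([(x, !s), (x, !s)] ++ [(y, !t), (y, !t)] ++ A)
    _ ∼ [] ++ [(x, s), (x, s)] ++ ([(y, !t), (y, !t)] ++ A ++ B) :=
        WEquiv.change_pair_sign _ _ x _ _ (by simp) (by simp [hxy, hxA, hxB])
    _ = [(x, s), (x, s)] ++ [(y, !t), (y, !t)] ++ (A ++ B) := by simp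
    _ ∼ [(x, s), (x, s)] ++ [(y, t), (y, t)] ++ (A ++ B) :=
        WEquiv.change_pair_sign _ _ y _ _ (by simp [hxy.symm]) (by simp [hyA, hyB])
    _ = [(x, s), (x, s)] ++ [(y, t), (y, t)] ++ A ++ B := by simp

def pairBlock (cs : List X) : Word X := cs.flatMap fun c => [(c, true), (c, true)]

@[simp] lemma pairBlock_nil : pairBlock ([] : List X) = [] := rfl

@[simp] lemma pairBlock_append (cs ds : List X) :
    pairBlock (cs ++ ds) = pairBlock cs ++ pairBlock ds := by
  simp [pairBlock]

@[simp] lemma pairBlock_cons (c : X) (cs : List X) :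
    pairBlock (c :: cs) = (c, true) :: (c, true) :: pairBlock cs := rfl

@[simp] lemma occurs_pairBlock {a : X} {cs : List X} : Occurs a (pairBlock cs) ↔ a ∈ cs := by
  simp [pairBlock, Occurs]

lemma pWord_get (cs : List X) : PWord cs.get = pairBlock cs := by
  simpa [PWord, pairBlock, List.flatMap] using
    congrArg List.flatten (List.ofFn_getElem_eq_map cs fun c => [(c, true), (c, true)])

lemma WEquiv.hive_off_concord_pair (cs : List X) (α β γ : Word X) (a : X) (s : Bool)
    (hcs : cs.Nodup) (hacs : a ∉ cs) (hα : ¬ Occurs a α) (hβ : ¬ Occurs a β) (hγ : ¬ Occurs a γ)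
    (hfresh : ∀ c ∈ cs, ¬ Occurs c (α ++ β ++ γ)) :
    ∃ u' : Word X, (u'.map Prod.fst).Perm ((α ++ β ++ γ).map Prod.fst) ∧
      pairBlock cs ++ (α ++ [(a, s)] ++ β ++ [(a, s)] ++ γ) ∼ pairBlock (cs ++ [a]) ++ u' := by
  rcases cs.eq_nil_or_concat' with rfl | ⟨cs₀, x, rfl⟩
  · refine ⟨γ ++ α ++ wordInv β, ?_, ?_⟩
    · simpa using List.perm_append_comm.trans
        (((perm_map_fst_wordInv β).append_left (α.map Prod.fst)).append_right (γ.map Prod.fst))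
    calc pairBlock [] ++ (α ++ [(a, s)] ++ β ++ [(a, s)] ++ γ)
        = α ++ [(a, s)] ++ β ++ [(a, s)] ++ γ := by simp
      _ ∼ α ++ wordInv β ++ [(a, s), (a, s)] ++ γ := WEquiv.concord_middle α β γ a s hα hβ hγ
      _ ∼ [] ++ [(a, s), (a, s)] ++ (γ ++ α ++ wordInv β) := by
          simpa using WEquiv.rotate (α ++ wordInv β) ([(a, s), (a, s)] ++ γ)
      _ ∼ [] ++ [(a, true), (a, true)] ++ (γ ++ α ++ wordInv β) :=
          WEquiv.change_pair_sign _ _ a s true (by simp) (by simp [hα, hβ, hγ])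
      _ = pairBlock ([] ++ [a]) ++ (γ ++ α ++ wordInv β) := by simp
  · have hx : x ∉ cs₀ := ((List.nodup_concat _ _).1 (by simpa using hcs)).1
    refine ⟨α ++ wordInv β ++ γ, ?_, ?_⟩
    · simpa using ((perm_map_fst_wordInv β).append_left _).append_right _
    calc pairBlock (cs₀ ++ [x]) ++ (α ++ [(a, s)] ++ β ++ [(a, s)] ++ γ)
        = (pairBlock cs₀ ++ [(x, true), (x, true)] ++ α) ++ [(a, s)] ++ β ++ [(a, s)] ++ γ := by
          simp
      _ ∼ (pairBlock cs₀ ++ [(x, true), (x, true)] ++ α) ++ wordInv β ++ [(a, s), (a, s)] ++ γ :=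
          WEquiv.concord_middle _ β γ a s (by simp_all) hβ hγ
      _ ∼ [(x, true), (x, true)] ++ (α ++ wordInv β) ++ [(a, s), (a, s)] ++
            (γ ++ pairBlock cs₀) := by
          simpa using WEquiv.rotate (pairBlock cs₀)
            ([(x, true), (x, true)] ++ (α ++ wordInv β) ++ [(a, s), (a, s)] ++ γ)
      _ ∼ [(x, true), (x, true)] ++ [(a, s), (a, s)] ++ (α ++ wordInv β) ++
            (γ ++ pairBlock cs₀) :=
          WEquiv.gather_pairs _ _ x a true s (by rintro rfl; simp_all) (by simp_all) (by simp_all)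
            (by simp_all) (by simp_all)
      _ ∼ pairBlock cs₀ ++ [(x, true), (x, true)] ++ [(a, s), (a, s)] ++
            (α ++ wordInv β ++ γ) := by
          simpa using WEquiv.rotate
            ([(x, true), (x, true)] ++ [(a, s), (a, s)] ++ (α ++ wordInv β) ++ γ) (pairBlock cs₀)
      _ ∼ (pairBlock cs₀ ++ [(x, true), (x, true)]) ++ [(a, true), (a, true)] ++
            (α ++ wordInv β ++ γ) :=
          WEquiv.change_pair_sign _ _ a s true (by simp_all) (by simp_all)
      _ = pairBlock (cs₀ ++ [x] ++ [a]) ++ (α ++ wordInv β ++ γ) := by simp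

lemma exists_weq_pairBlock_append_discord [DecidableEq X] (cs : List X) (u : Word X)
    (hcs : cs.Nodup) (hfresh : ∀ c ∈ cs, ¬ Occurs c u) (hu : IsPolygon u) :
    ∃ (cs' : List X) (w' : Word X), cs'.Nodup ∧ IsPolygon w' ∧ ¬ HasConcordPair w' ∧
      (∀ c ∈ cs', ¬ Occurs c w') ∧ pairBlock cs ++ u ∼ pairBlock cs' ++ w' := by
  by_cases hc : HasConcordPair u
  swap
  · exact ⟨cs, u, hcs, hu, hc, hfresh, WEquiv.refl _⟩
  obtain ⟨a, s, α, β, γ, rfl⟩ := hc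
  have hperm := map_fst_perm_of_concord α β γ a s
  have ha : ¬ Occurs a (α ++ β ++ γ) := (hu.of_perm_cons_cons hperm).2
  have hacs : a ∉ cs := fun h => hfresh a h ⟨s, by simp⟩
  simp only [occurs_append, not_or] at ha
  obtain ⟨u', hu'perm, hstep⟩ := WEquiv.hive_off_concord_pair cs α β γ a s hcs hacs
    ha.1.1 ha.1.2 ha.2 fun c hc => by have := hfresh c hc; simp_all
  have hperm' := hperm.trans ((hu'perm.symm.cons a).cons a)
  obtain ⟨hu', hau'⟩ := hu.of_perm_cons_cons hperm'
  have hfresh' : ∀ c ∈ cs ++ [a], ¬ Occurs c u' := by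
    intro c hc hcu'
    rcases List.mem_append.1 hc with hc | hc
    · refine hfresh c hc (occurs_iff_mem_map.2 (hperm'.mem_iff.2 ?_))
      exact List.mem_cons_of_mem _ (List.mem_cons_of_mem _ (occurs_iff_mem_map.1 hcu'))
    · exact hau' (List.mem_singleton.1 hc ▸ hcu')
  have hlen : u'.length < (α ++ [(a, s)] ++ β ++ [(a, s)] ++ γ).length := by
    have := hperm'.length_eq
    simp only [List.length_map, List.length_cons] at this
    omega
  obtain ⟨cs', w', hcs', hw', hc', hw'fresh, hrest⟩ :=
    exists_weq_pairBlock_append_discord (cs ++ [a]) u' (by simpa using hcs.concat hacs) hfresh' hu'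
  exact ⟨cs', w', hcs', hw', hc', hw'fresh, hstep.trans hrest⟩
termination_by u.length

end

/-- Step (a) of the classification proof: all projective planes can be hived off,
leaving a polygon word with only discord pairs, on fresh letters. -/
theorem hive_off_projective_planes {X : Type*} [DecidableEq X]
    (w : Word X) (hw : IsPolygon w) :
    ∃ (k : ℕ) (a : Fin k → X) (w' : Word X),
      Function.Injective a ∧ IsPolygon w' ∧ ¬ HasConcordPair w' ∧
      (∀ i : Fin k, ¬ Occurs (a i) w') ∧ WEquiv w (PWord a ++ w') := by
  obtain ⟨cs, w', hcs, hw', hc, hfresh, hequiv⟩ :=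
    exists_weq_pairBlock_append_discord [] w List.nodup_nil (by simp) hw
  refine ⟨cs.length, cs.get, w', List.nodup_iff_injective_get.1 hcs, hw', hc,
    fun i => hfresh _ (List.get_mem cs i), ?_⟩
  simpa [pWord_get] using hequiv

end Surface
end
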